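/- arXiv:1308.1450 — 2 statements merged into one kernel-verified Lean document; each statement's English description precedes it below -/
import Mathlib

section
/- Suppose β : [0,t₀) → ℝ is C¹ and satisfies dβ/dt = -a(t)/(2β(t)) - b(t) with β(t) < 0 on [0,t₀), where a, b : [0,t₀] → ℝ are continuous, a(t₀) = a₄ > 0, b bounded, and β(t) → 0 as t ↗ t₀. Then β(t)² = a₄(t₀-t) + o(t₀-t) as t ↗ t₀; in particular |β(t)| ~ √(a₄(t₀-t)). -/
/-!
Set `F(t) = β(t)² + a₄ t`. The equation gives `F' = 2ββ' + a₄ = (a₄ - a) - 2βb`, which tends to `0`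
as `t ↗ t₀` because `a(t) → a₄`, `β → 0` and `b` is bounded, while `F(t) → a₄ t₀`. By the mean
value inequality on `[t, t₀)`, `F(t) - a₄ t₀ = β(t)² - a₄(t₀ - t)` is `o(t₀ - t)`; taking square
roots gives `|β(t)| ~ √(a₄(t₀ - t))`.
-/

open Real Filter Asymptotics Topology Set

section MeanValue

variable {E : Type*} [NormedAddCommGroup E] [NormedSpace ℝ E] {f f' : ℝ → E} {t₀ : ℝ} {L : E}

theorem norm_sub_le_mul_of_hasDerivAt_of_tendsto {c C t : ℝ}
    (hderiv : ∀ s ∈ Ioo c t₀, HasDerivAt f (f' s) s) (hbound : ∀ s ∈ Ioo c t₀, ‖f' s‖ ≤ C)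
    (hf : Tendsto f (𝓝[<] t₀) (𝓝 L)) (ht : t ∈ Ioo c t₀) :
    ‖f t - L‖ ≤ C * (t₀ - t) := by
  have hsegment : ∀ s ∈ Ioo t t₀, ‖f s - f t‖ ≤ C * (s - t) := fun s hs =>
    norm_image_sub_le_of_norm_deriv_le_segment'
      (fun x hx => (hderiv x ⟨ht.1.trans_le hx.1, hx.2.trans_lt hs.2⟩).hasDerivWithinAt)
      (fun x hx => hbound x ⟨ht.1.trans_le hx.1, hx.2.trans hs.2⟩) s (right_mem_Icc.2 hs.1.le)
  have hrhs : Tendsto (fun s => C * (s - t)) (𝓝[<] t₀) (𝓝 (C * (t₀ - t))) :=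
    tendsto_nhdsWithin_of_tendsto_nhds ((continuous_const.mul (continuous_id.sub
      continuous_const)).tendsto t₀)
  rw [norm_sub_rev]
  exact le_of_tendsto_of_tendsto (hf.sub_const (f t)).norm hrhs
    (mem_of_superset (Ioo_mem_nhdsLT ht.2) hsegment)

theorem isLittleO_sub_of_tendsto_deriv_zero
    (hderiv : ∀ᶠ t in 𝓝[<] t₀, HasDerivAt f (f' t) t) (hf' : Tendsto f' (𝓝[<] t₀) (𝓝 0))
    (hf : Tendsto f (𝓝[<] t₀) (𝓝 L)) :
    (fun t => f t - L) =o[𝓝[<] t₀] (fun t => t₀ - t) := by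
  refine isLittleO_iff.2 fun ε hε => ?_
  have hsmall : ∀ᶠ t in 𝓝[<] t₀, HasDerivAt f (f' t) t ∧ ‖f' t‖ ≤ ε :=
    hderiv.and (hf'.norm.eventually (ge_mem_nhds (by simpa using hε)))
  obtain ⟨c, hc, hsub⟩ := mem_nhdsLT_iff_exists_Ioo_subset.1 hsmall
  filter_upwards [Ioo_mem_nhdsLT hc] with t ht
  rw [Real.norm_of_nonneg (sub_nonneg.2 ht.2.le)]
  exact norm_sub_le_mul_of_hasDerivAt_of_tendsto (fun s hs => (hsub hs).1)
    (fun s hs => (hsub hs).2) hf ht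

end MeanValue

theorem tendsto_abs_div_sqrt_of_isLittleO {α : Type*} {l : Filter α} {u h : α → ℝ} {c : ℝ}
    (hc : c ≠ 0) (hh : ∀ᶠ x in l, h x ≠ 0) (hu : (fun x => u x ^ 2 - c * h x) =o[l] h) :
    Tendsto (fun x => |u x| / √(c * h x)) l (𝓝 1) := by
  have hequiv : (fun x => u x ^ 2) ~[l] (fun x => c * h x) := hu.const_mul_right' hc.isUnit
  have hratio := (isEquivalent_iff_tendsto_one (hh.mono fun x hx => mul_ne_zero hc hx)).1 hequiv
  simpa [Real.sqrt_div (sq_nonneg _), Real.sqrt_sq_eq_abs] using hratio.sqrt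

theorem hasDerivAt_sq_add_mul_of_hasDerivAt {β : ℝ → ℝ} {t a b c : ℝ}
    (hβ : HasDerivAt β (-a / (2 * β t) - b) t) (hβt : β t ≠ 0) :
    HasDerivAt (fun s => β s ^ 2 + c * s) (c - a - 2 * β t * b) t := by
  refine ((hβ.fun_pow 2).add ((hasDerivAt_id' t).const_mul c)).congr_deriv ?_
  field_simp
  ring

theorem stmt3_general (t₀ a₄ : ℝ) (ht₀ : 0 < t₀) (β a b : ℝ → ℝ)
    (hβreg : ContDiffOn ℝ 1 β (Set.Ico 0 t₀))
    (hode : ∀ t ∈ Set.Ico (0:ℝ) t₀, deriv β t = -(a t) / (2 * β t) - b t)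
    (hβneg : ∀ t ∈ Set.Ico (0:ℝ) t₀, β t < 0)
    (ha : ContinuousOn a (Set.Icc 0 t₀))
    (ha₄ : a t₀ = a₄) (ha₄pos : 0 < a₄)
    (hbbdd : ∃ M, ∀ t ∈ Set.Icc (0:ℝ) t₀, |b t| ≤ M)
    (hβ0 : Tendsto β (nhdsWithin t₀ (Set.Iio t₀)) (nhds 0)) :
    (fun t => β t ^ 2 - a₄ * (t₀ - t)) =o[nhdsWithin t₀ (Set.Iio t₀)] (fun t => t₀ - t) ∧
    Tendsto (fun t => |β t| / Real.sqrt (a₄ * (t₀ - t)))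
      (nhdsWithin t₀ (Set.Iio t₀)) (nhds 1) := by
  obtain ⟨M, hM⟩ := hbbdd
  have hIoo : ∀ᶠ t in 𝓝[<] t₀, t ∈ Ioo 0 t₀ := Ioo_mem_nhdsLT ht₀
  have hderiv : ∀ᶠ t in 𝓝[<] t₀,
      HasDerivAt (fun s => β s ^ 2 + a₄ * s) (a₄ - a t - 2 * β t * b t) t := by
    filter_upwards [hIoo] with t ht
    have hβt := (hβreg.contDiffAt (Ico_mem_nhds ht.1 ht.2)).differentiableAt one_ne_zero
    exact hasDerivAt_sq_add_mul_of_hasDerivAt (hode t ⟨ht.1.le, ht.2⟩ ▸ hβt.hasDerivAt)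
      (hβneg t ⟨ht.1.le, ht.2⟩).ne
  have ha_lim : Tendsto a (𝓝[<] t₀) (𝓝 a₄) :=
    ha₄ ▸ (ha t₀ (right_mem_Icc.2 ht₀.le)).mono_of_mem_nhdsWithin (Icc_mem_nhdsLT ht₀)
  have hβb : Tendsto (fun t => β t * b t) (𝓝[<] t₀) (𝓝 0) :=
    hβ0.zero_mul_isBoundedUnder_le (isBoundedUnder_of_eventually_le (a := M) <|
      hIoo.mono fun t ht => hM t (Ioo_subset_Icc_self ht))
  have hderiv_lim : Tendsto (fun t => a₄ - a t - 2 * β t * b t) (𝓝[<] t₀) (𝓝 0) := by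
    simpa [mul_assoc] using ((tendsto_const_nhds (x := a₄)).sub ha_lim).sub (hβb.const_mul 2)
  have hlim : Tendsto (fun t => β t ^ 2 + a₄ * t) (𝓝[<] t₀) (𝓝 (a₄ * t₀)) := by
    simpa using (hβ0.pow 2).add
      (tendsto_nhdsWithin_of_tendsto_nhds ((continuous_const_mul a₄).tendsto t₀))
  have hsq : (fun t => β t ^ 2 - a₄ * (t₀ - t)) =o[𝓝[<] t₀] (fun t => t₀ - t) :=
    (isLittleO_sub_of_tendsto_deriv_zero hderiv hderiv_lim hlim).congr_left fun t => by ring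
  exact ⟨hsq, tendsto_abs_div_sqrt_of_isLittleO ha₄pos.ne'
    (hIoo.mono fun t ht => (sub_pos.2 ht.2).ne') hsq⟩

/-- Near the blow-up time, the solution of `β' = -a/(2β) - b` with `β < 0`, `β → 0⁻`,
`a → a₄ > 0` and `b` bounded satisfies `β² = a₄(t₀-t) + o(t₀-t)`, hence
`|β(t)| ~ √(a₄(t₀-t))`. -/
theorem stmt3 (t₀ a₄ : ℝ) (ht₀ : 0 < t₀) (β a b : ℝ → ℝ)
    (hβreg : ContDiffOn ℝ 1 β (Set.Ico 0 t₀))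
    (hode : ∀ t ∈ Set.Ico (0:ℝ) t₀, deriv β t = -(a t) / (2 * β t) - b t)
    (hβneg : ∀ t ∈ Set.Ico (0:ℝ) t₀, β t < 0)
    (ha : ContinuousOn a (Set.Icc 0 t₀))
    (hb : ContinuousOn b (Set.Icc 0 t₀))
    (ha₄ : a t₀ = a₄) (ha₄pos : 0 < a₄)
    (hbbdd : ∃ M, ∀ t ∈ Set.Icc (0:ℝ) t₀, |b t| ≤ M)
    (hβ0 : Tendsto β (nhdsWithin t₀ (Set.Iio t₀)) (nhds 0)) :
    (fun t => β t ^ 2 - a₄ * (t₀ - t)) =o[nhdsWithin t₀ (Set.Iio t₀)] (fun t => t₀ - t) ∧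
    Tendsto (fun t => |β t| / Real.sqrt (a₄ * (t₀ - t)))
      (nhdsWithin t₀ (Set.Iio t₀)) (nhds 1) :=
  stmt3_general t₀ a₄ ht₀ β a b hβreg hode hβneg ha ha₄ ha₄pos hbbdd hβ0
end

section
/- Under the hypotheses of the previous statement (β' = -a/(2β) - b, β→0⁻, a→a₄>0, b bounded as t↗t₀), the velocity V(t) := a(t)/β(t) satisfies |V(t)| ~ √(a₄/(t₀-t)) as t ↗ t₀; i.e., V blows up with power-law rate p = 1/2. -/
open Real Filter Asymptotics

/-!
Along solutions, `(β²)' = 2ββ' = -(a + 2βb)`, which tends to `-a₄` because `β → 0` and `b` is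
bounded. Since `β² → 0`, l'Hôpital's rule gives `β² ~ a₄ (t₀ - t)`, hence
`|V| = |a| / |β| ~ a₄ / √(a₄ (t₀ - t)) = √(a₄ / (t₀ - t))`.
-/

open Set Topology

theorem tendsto_div_sub_nhdsLT_of_hasDerivAt {f f' : ℝ → ℝ} {t₀ L : ℝ}
    (hf : ∀ᶠ t in 𝓝[<] t₀, HasDerivAt f (f' t) t) (hf0 : Tendsto f (𝓝[<] t₀) (𝓝 0))
    (hf' : Tendsto (fun t => -f' t) (𝓝[<] t₀) (𝓝 L)) :
    Tendsto (fun t => f t / (t₀ - t)) (𝓝[<] t₀) (𝓝 L) := by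
  refine HasDerivAt.lhopital_zero_nhdsLT (g' := fun _ => -1) hf
    (Eventually.of_forall fun t => by simpa using (hasDerivAt_id t).const_sub t₀)
    (Eventually.of_forall fun _ => by norm_num) hf0 ?_ ?_
  · simpa using ((continuous_sub_left t₀).tendsto t₀).mono_left nhdsWithin_le_nhds
  · simpa [div_neg] using hf'

theorem hasDerivAt_sq_of_deriv_eq {β a b : ℝ → ℝ} {t : ℝ} (hβ : DifferentiableAt ℝ β t)
    (hne : β t ≠ 0) (hode : deriv β t = -a t / (2 * β t) - b t) :
    HasDerivAt (fun s => β s ^ 2) (-(a t + 2 * β t * b t)) t := by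
  have h := hβ.hasDerivAt.fun_pow 2
  rw [hode] at h
  refine h.congr_deriv ?_
  field_simp
  ring

theorem tendsto_sq_div_sub_of_deriv_eq {β a b : ℝ → ℝ} {t₀ A : ℝ}
    (hdiff : ∀ᶠ t in 𝓝[<] t₀, DifferentiableAt ℝ β t) (hne : ∀ᶠ t in 𝓝[<] t₀, β t ≠ 0)
    (hode : ∀ᶠ t in 𝓝[<] t₀, deriv β t = -a t / (2 * β t) - b t)
    (hβ0 : Tendsto β (𝓝[<] t₀) (𝓝 0)) (ha : Tendsto a (𝓝[<] t₀) (𝓝 A))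
    (hb : IsBoundedUnder (· ≤ ·) (𝓝[<] t₀) (norm ∘ b)) :
    Tendsto (fun t => β t ^ 2 / (t₀ - t)) (𝓝[<] t₀) (𝓝 A) := by
  refine tendsto_div_sub_nhdsLT_of_hasDerivAt (f' := fun t => -(a t + 2 * β t * b t)) ?_
    (by simpa using hβ0.pow 2) ?_
  · filter_upwards [hdiff, hne, hode] with t hd hn ho
    exact hasDerivAt_sq_of_deriv_eq hd hn ho
  · have hβb : Tendsto (fun t => 2 * β t * b t) (𝓝[<] t₀) (𝓝 0) := by
      simpa [mul_assoc] using (hβ0.zero_mul_isBoundedUnder_le hb).const_mul 2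
    simpa using ha.add hβb

theorem stmt4_general (t₀ a₄ : ℝ) (ht₀ : 0 < t₀) (β a b V : ℝ → ℝ)
    (hβreg : ContDiffOn ℝ 1 β (Set.Ico 0 t₀))
    (hode : ∀ t ∈ Set.Ico (0:ℝ) t₀, deriv β t = -(a t) / (2 * β t) - b t)
    (hβneg : ∀ t ∈ Set.Ico (0:ℝ) t₀, β t < 0)
    (ha : ContinuousOn a (Set.Icc 0 t₀))
    (ha₄ : a t₀ = a₄) (ha₄pos : 0 < a₄)
    (hbbdd : ∃ M, ∀ t ∈ Set.Icc (0:ℝ) t₀, |b t| ≤ M)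
    (hβ0 : Tendsto β (nhdsWithin t₀ (Set.Iio t₀)) (nhds 0))
    (hVdef : ∀ t ∈ Set.Ico (0:ℝ) t₀, V t = a t / β t) :
    Tendsto (fun t => |V t| / Real.sqrt (a₄ / (t₀ - t)))
      (nhdsWithin t₀ (Set.Iio t₀)) (nhds 1) := by
  have hIoo : Ioo 0 t₀ ∈ 𝓝[<] t₀ := Ioo_mem_nhdsLT ht₀
  have hIco : Ico 0 t₀ ∈ 𝓝[<] t₀ := mem_of_superset hIoo Ioo_subset_Ico_self
  have haT : Tendsto a (𝓝[<] t₀) (𝓝 a₄) := ha₄ ▸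
    ((ha t₀ ⟨ht₀.le, le_rfl⟩).mono_of_mem_nhdsWithin
      (mem_of_superset hIoo Ioo_subset_Icc_self)).tendsto
  obtain ⟨M, hM⟩ := hbbdd
  have hQ : Tendsto (fun t => β t ^ 2 / (t₀ - t)) (𝓝[<] t₀) (𝓝 a₄) := by
    refine tendsto_sq_div_sub_of_deriv_eq ?_ (mem_of_superset hIco fun t ht => (hβneg t ht).ne)
      (mem_of_superset hIco hode) hβ0 haT
      (isBoundedUnder_of_eventually_le (a := M) (mem_of_superset hIoo fun t ht =>
        hM t (Ioo_subset_Icc_self ht)))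
    filter_upwards [hIoo] with t ht
    exact (hβreg.differentiableOn one_ne_zero t (Ioo_subset_Ico_self ht)).differentiableAt
      (Ico_mem_nhds ht.1 ht.2)
  have hlim : Tendsto (fun t => |a t| / √(β t ^ 2 / (t₀ - t) * a₄)) (𝓝[<] t₀) (𝓝 1) := by
    have := haT.abs.div (hQ.mul_const a₄).sqrt (by positivity)
    rwa [abs_of_pos ha₄pos, sqrt_mul_self ha₄pos.le, div_self ha₄pos.ne'] at this
  refine hlim.congr' ?_
  filter_upwards [hIco] with t ht
  rw [hVdef t ht, abs_div, div_div, ← sqrt_sq_eq_abs (β t), ← sqrt_mul (sq_nonneg _)]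
  ring_nf

/-- Under the blow-up hypotheses for `β' = -a/(2β) - b`, the velocity `V = a/β`
blows up with the power-law rate `p = 1/2`: `|V(t)| ~ √(a₄/(t₀-t))` as `t ↗ t₀`. -/
theorem stmt4 (t₀ a₄ : ℝ) (ht₀ : 0 < t₀) (β a b V : ℝ → ℝ)
    (hβreg : ContDiffOn ℝ 1 β (Set.Ico 0 t₀))
    (hode : ∀ t ∈ Set.Ico (0:ℝ) t₀, deriv β t = -(a t) / (2 * β t) - b t)
    (hβneg : ∀ t ∈ Set.Ico (0:ℝ) t₀, β t < 0)
    (ha : ContinuousOn a (Set.Icc 0 t₀))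
    (hb : ContinuousOn b (Set.Icc 0 t₀))
    (ha₄ : a t₀ = a₄) (ha₄pos : 0 < a₄)
    (hbbdd : ∃ M, ∀ t ∈ Set.Icc (0:ℝ) t₀, |b t| ≤ M)
    (hβ0 : Tendsto β (nhdsWithin t₀ (Set.Iio t₀)) (nhds 0))
    (hVdef : ∀ t ∈ Set.Ico (0:ℝ) t₀, V t = a t / β t) :
    Tendsto (fun t => |V t| / Real.sqrt (a₄ / (t₀ - t)))
      (nhdsWithin t₀ (Set.Iio t₀)) (nhds 1) :=
  stmt4_general t₀ a₄ ht₀ β a b V hβreg hode hβneg ha ha₄ ha₄pos hbbdd hβ0 hVdef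
end
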